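/- Let K[A,B] be a polynomial ring over a field K of characteristic p = nk+δ, where n ≥ 4, k ≥ 1, and 2 ≤ δ ≤ n-1. Then every monomial of degree (2n-3)k in A and B lies in the ideal I = (A^{(n-1)k+1}, B^{(n-1)k+1}, (A+B)^{(n-1)k+1}); that is, (A,B)^{(2n-3)k} ⊆ I. -/

import Mathlib

section Helpers

open Polynomial

private lemma two_mul_choose_two' (m : ℕ) : 2 * Nat.choose m 2 = m * (m-1) := by
  induction m with
  | zero => simp
  | succ m ih =>
    rw [Nat.choose_succ_succ, Nat.mul_add, ih, Nat.choose_one_right]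
    cases m with
    | zero => simp
    | succ j => simp [Nat.succ_sub_one]; ring

private lemma six_mul_choose_three' (m : ℕ) : 6 * Nat.choose m 3 = m * (m-1) * (m-2) := by
  induction m with
  | zero => simp
  | succ m ih =>
    rw [Nat.choose_succ_succ, Nat.mul_add, ih]
    have h2 : 6 * Nat.choose m 2 = 3 * (m * (m-1)) := by
      rw [show (6:ℕ) = 3*2 by norm_num, mul_assoc, two_mul_choose_two']
    rw [h2]
    cases m with
    | zero => simp
    | succ j => cases j with
      | zero => simp
      | succ i => simp [Nat.succ_sub_one, Nat.succ_sub_succ]; ring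

private lemma cast_ne_zero_of_lt' {K : Type*} [Field K] (p : ℕ) [CharP K p] (m : ℕ)
    (h0 : 0 < m) (h1 : m < p) : (m : K) ≠ 0 := by
  intro h
  rw [CharP.cast_eq_zero_iff K p] at h
  exact absurd (Nat.le_of_dvd h0 h) (by omega)

private lemma core' {K : Type*} [Field K] (p k δ W q : ℕ) [Fact p.Prime] [CharP K p]
    (hk : 1 ≤ k) (hδ : 2 ≤ δ) (hq : q = W + k + 1) (hp : p = W + 2*k + δ)
    (hW : k + δ - 1 ≤ W ∨ (k = 1 ∧ W = δ - 1 ∧ 3 ≤ δ))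
    (c : ℕ → K) (hc : ∀ j, k < j → c j = 0)
    (H : ∀ t, k+1 ≤ t → t ≤ W + k →
      ∑ j ∈ Finset.range (k+1), c j * (Nat.choose q (t - j) : K) = 0) :
    ∀ j, c j = 0 := by
  rcases hW with hWm | ⟨hk1, hWe, hδ3⟩
  · -- main case
    set g : K[X] := ∑ j ∈ Finset.range (k+1), monomial j (c j) with hg
    have gcoeff : ∀ m, g.coeff m = c m := by
      intro m
      rw [hg, finset_sum_coeff]
      simp only [coeff_monomial]
      rw [Finset.sum_ite_eq' (Finset.range (k+1)) m c]
      by_cases h : m ∈ Finset.range (k+1)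
      · rw [if_pos h]
      · rw [if_neg h, hc m (by simpa using h)]
    set h : K[X] := g * (X+1)^q with hh
    have hcoeffh : ∀ t, k+1 ≤ t → t ≤ W + k → h.coeff t = 0 := by
      intro t ht1 ht2
      rw [hh, coeff_mul, Finset.Nat.sum_antidiagonal_eq_sum_range_succ_mk]
      have e1 : ∀ i ∈ Finset.range (t+1), g.coeff i * ((X+1:K[X])^q).coeff (t-i)
          = c i * (Nat.choose q (t-i) : K) := by
        intro i _
        rw [gcoeff, coeff_X_add_one_pow]
      rw [Finset.sum_congr rfl e1]
      rw [← Finset.sum_subset (Finset.range_subset_range.2 (show k+1 ≤ t+1 by omega))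
        (fun i _ hi => by rw [hc i (by simpa using hi), zero_mul])]
      exact H t ht1 ht2
    have hkey : h * (X+1)^(k+δ-1) = g + X^p * g := by
      rw [hh, mul_assoc, ← pow_add, show q + (k+δ-1) = p by omega, add_pow_char, one_pow,
        mul_add, mul_one, mul_comm g (X^p), add_comm]
    set h₁ : K[X] := h %ₘ X^q with hh1
    set h₂ : K[X] := h /ₘ X^q with hh2
    have hsplit : h = X^q * h₂ + h₁ := by
      rw [hh1, hh2, add_comm]; exact (modByMonic_add_div h (X^q)).symm
    have hc1 : ∀ m, k < m → h₁.coeff m = 0 := by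
      intro m hm
      rcases lt_or_ge m q with hmq | hmq
      · have hcm : h.coeff m = (X^q * h₂).coeff m + h₁.coeff m := by rw [← coeff_add, ← hsplit]
        rw [mul_comm, coeff_mul_X_pow', if_neg (by omega)] at hcm
        rw [← zero_add (h₁.coeff m), ← hcm]
        exact hcoeffh m (by omega) (by omega)
      · refine coeff_eq_zero_of_degree_lt
          (lt_of_lt_of_le (degree_modByMonic_lt h (monic_X_pow q)) ?_)
        rw [degree_X_pow]
        exact_mod_cast Nat.cast_le.2 hmq
    have h10 : h₁ = 0 := by
      by_contra hne
      set u : K[X] := h₁ * (X+1)^(k+δ-1) with hu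
      have hXne : ((X:K[X])+1) ≠ 0 := by
        have := monic_X_add_C (1:K)
        simpa using this.ne_zero
      have hu_ne : u ≠ 0 := mul_ne_zero hne (pow_ne_zero _ hXne)
      have hdeg1 : h₁.natDegree ≤ k := natDegree_le_iff_coeff_eq_zero.2 fun m hm => hc1 m hm
      have hdu : u.natDegree = h₁.natDegree + (k+δ-1) := by
        rw [hu, natDegree_mul hne (pow_ne_zero _ hXne), natDegree_pow]
        have : ((X:K[X])+1).natDegree = 1 := by simpa using natDegree_X_add_C (1:K)
        rw [this, mul_one]
      set t₀ := u.natDegree with ht0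
      have ht1 : k+1 ≤ t₀ := by omega
      have ht2 : t₀ ≤ W + k := by omega
      have key2 : (X^q * h₂ + h₁) * (X+1)^(k+δ-1) = g + X^p * g := by rw [← hsplit]; exact hkey
      have hco := congrArg (fun f => Polynomial.coeff f t₀) key2
      simp only [add_mul, coeff_add] at hco
      rw [mul_assoc, mul_comm (X^q : K[X]), coeff_mul_X_pow', if_neg (by omega)] at hco
      rw [mul_comm (X^p : K[X]) g, coeff_mul_X_pow', if_neg (by omega)] at hco
      rw [gcoeff, hc t₀ (by omega)] at hco
      have hu0 : u.coeff t₀ = 0 := by rw [← hu] at hco; simpa using hco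
      exact (leadingCoeff_ne_zero.2 hu_ne) hu0
    have key3 : (X^q * h₂) * (X+1)^(k+δ-1) = g + X^p * g := by
      rw [← hkey, hsplit, h10, add_zero]
    have hlow : ∀ m, m ≤ k → c m = 0 := by
      intro m hm
      have hco := congrArg (fun f => Polynomial.coeff f m) key3
      simp only [coeff_add] at hco
      rw [mul_assoc, mul_comm (X^q : K[X]), coeff_mul_X_pow', if_neg (by omega)] at hco
      rw [mul_comm (X^p : K[X]) g, coeff_mul_X_pow', if_neg (by omega), add_zero, gcoeff] at hco
      exact hco.symm
    intro j
    rcases le_or_gt j k with h | h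
    · exact hlow j h
    · exact hc j h
  · -- edge case : k = 1, W = δ - 1, 3 ≤ δ
    subst hk1
    have hq4 : 4 ≤ q := by omega
    have hpq : p = 2*q - 1 := by omega
    have E2 := H 2 (by omega) (by omega)
    have E3 := H 3 (by omega) (by omega)
    rw [Finset.sum_range_succ, Finset.sum_range_one] at E2 E3
    norm_num at E2 E3
    have ch2K : (2:K) * (Nat.choose q 2 : K) = (q:K) * ((q:K)-1) := by
      have := congrArg (Nat.cast : ℕ → K) (two_mul_choose_two' q)
      push_cast [Nat.cast_sub (show 1 ≤ q by omega)] at this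
      exact this
    have ch3K : (6:K) * (Nat.choose q 3 : K) = (q:K) * ((q:K)-1) * ((q:K)-2) := by
      have := congrArg (Nat.cast : ℕ → K) (six_mul_choose_three' q)
      push_cast [Nat.cast_sub (show 1 ≤ q by omega), Nat.cast_sub (show 2 ≤ q by omega)] at this
      exact this
    have hqK : (q:K) ≠ 0 := cast_ne_zero_of_lt' p q (by omega) (by omega)
    have hq1K : (q:K) - 1 ≠ 0 := by
      rw [show ((q:K) - 1) = ((q-1 : ℕ) : K) by
        push_cast [Nat.cast_sub (show 1 ≤ q by omega)]; ring]
      exact cast_ne_zero_of_lt' p (q-1) (by omega) (by omega)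
    have hq2K : (q:K) + 1 ≠ 0 := by
      rw [show ((q:K) + 1) = ((q+1 : ℕ) : K) by push_cast; ring]
      exact cast_ne_zero_of_lt' p (q+1) (by omega) (by omega)
    have hdet : (q : K) * (Nat.choose q 3 : K) - (Nat.choose q 2 : K)^2 ≠ 0 := by
      intro heq
      have h12 : ((q:K))^2 * ((q:K)-1) * ((q:K)+1) = 0 := by
        have e1 : (12:K) * ((Nat.choose q 2 : K))^2 = 3 * ((q:K)*((q:K)-1))^2 := by
          rw [← ch2K]; ring
        have e2 : (12:K) * ((q : K) * (Nat.choose q 3 : K))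
            = 2 * (q:K) * ((q:K) * ((q:K)-1) * ((q:K)-2)) := by
          rw [← ch3K]; ring
        have e3 : (12:K) * ((q : K) * (Nat.choose q 3 : K))
            = (12:K) * ((Nat.choose q 2 : K))^2 := by
          rw [sub_eq_zero] at heq; rw [heq]
        rw [e1, e2] at e3
        linear_combination -e3
      rcases mul_eq_zero.1 h12 with h' | h'
      · rcases mul_eq_zero.1 h' with h'' | h''
        · exact hqK (pow_eq_zero_iff (by norm_num)|>.1 h'')
        · exact hq1K h''
      · exact hq2K h'
    have hC2 : (Nat.choose q 2 : K) ≠ 0 := by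
      intro h0
      have hz : (q:K) * ((q:K)-1) = 0 := by rw [← ch2K, h0]; ring
      rcases mul_eq_zero.1 hz with h' | h'
      · exact hqK h'
      · exact hq1K h'
    have hc1 : c 1 = 0 := by
      have comb : c 1 * ((q : K) * (Nat.choose q 3 : K) - (Nat.choose q 2 : K)^2) = 0 := by
        linear_combination (Nat.choose q 3 : K) * E2 - (Nat.choose q 2 : K) * E3
      rcases mul_eq_zero.1 comb with h' | h'
      · exact h'
      · exact absurd h' hdet
    have hc0 : c 0 = 0 := by
      rw [hc1, zero_mul, add_zero] at E2
      rcases mul_eq_zero.1 E2 with h' | h'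
      · exact h'
      · exact absurd h' hC2
    intro j
    match j with
    | 0 => exact hc0
    | 1 => exact hc1
    | (j+2) => exact hc (j+2) (by omega)

private lemma rel_lemma' {K Q : Type*} [Field K] [CommRing Q] [Algebra K Q] (k W q : ℕ)
    (hk : 1 ≤ k) (hW1 : 1 ≤ W) (hq : q = W + k + 1)
    (α β : Q) (hα : α^q = 0) (hβ : β^q = 0) (hs : (α+β)^q = 0) (s : ℕ) (hsW : s < W) :
    ∑ j ∈ Finset.range (k+1), (Nat.choose q (W + j - s) : K) • (α^(W+j) * β^(q-1-j)) = 0 := by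
  have h0 : α^s * β^(W-1-s) * (α+β)^q = 0 := by rw [hs, mul_zero]
  rw [add_pow] at h0
  rw [Finset.mul_sum] at h0
  have e1 : ∀ i ∈ Finset.range (q+1),
      α^s * β^(W-1-s) * (α^i * β^(q-i) * (Nat.choose q i : Q))
      = (Nat.choose q i : Q) * (α^(s+i) * β^(W-1-s+(q-i))) := by
    intro i _
    rw [pow_add, pow_add]; ring
  rw [Finset.sum_congr rfl e1] at h0
  have e2 : ∑ i ∈ Finset.range (q+1), (Nat.choose q i : Q) * (α^(s+i) * β^(W-1-s+(q-i)))
      = ∑ i ∈ Finset.Ico (W-s) (W+k-s+1), (Nat.choose q i : Q) * (α^(s+i) * β^(W-1-s+(q-i))) := by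
    refine (Finset.sum_subset ?_ ?_).symm
    · intro i hi
      rw [Finset.mem_Ico] at hi
      rw [Finset.mem_range]
      omega
    · intro i hi hni
      rw [Finset.mem_range] at hi
      rw [Finset.mem_Ico] at hni
      rcases (show i < W - s ∨ W + k - s < i by omega) with h' | h'
      · have he : W-1-s+(q-i) = q + (W-1-s-i) := by omega
        rw [he, pow_add β q, hβ, zero_mul, mul_zero, mul_zero]
      · have he : s + i = q + (s+i-q) := by omega
        rw [he, pow_add α q, hα, zero_mul, zero_mul, mul_zero]
  rw [e2] at h0
  rw [Finset.sum_Ico_eq_sum_range] at h0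
  have hcard : W + k - s + 1 - (W - s) = k + 1 := by omega
  rw [hcard] at h0
  rw [← h0]
  apply Finset.sum_congr rfl
  intro j hj
  rw [Finset.mem_range] at hj
  have e3 : W - s + j = W + j - s := by omega
  have e4 : s + (W + j - s) = W + j := by omega
  have e5 : W-1-s+(q-(W+j-s)) = q - 1 - j := by omega
  rw [e3, e4, e5]
  rw [Nat.cast_smul_eq_nsmul, nsmul_eq_mul]

private lemma hard' {K Q : Type*} [Field K] [CommRing Q] [Algebra K Q] (p k δ W q : ℕ)
    [Fact p.Prime] [CharP K p]
    (hk : 1 ≤ k) (hδ : 2 ≤ δ) (hq : q = W + k + 1) (hp : p = W + 2*k + δ)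
    (hW : k + δ - 1 ≤ W ∨ (k = 1 ∧ W = δ - 1 ∧ 3 ≤ δ)) (hW1 : 1 ≤ W)
    (α β : Q) (hα : α^q = 0) (hβ : β^q = 0) (hs : (α+β)^q = 0) :
    ∀ j ≤ k, α^(W+j) * β^(q-1-j) = 0 := by
  set T : Matrix (Fin W) (Fin (k+1)) K :=
    fun s j => (Nat.choose q (W + (j:ℕ) - (s:ℕ)) : K) with hT
  have hinj : LinearMap.ker (Matrix.toLin' T) = ⊥ := by
    rw [LinearMap.ker_eq_bot']
    intro c hc0
    set c' : ℕ → K := fun j => if h : j < k+1 then c ⟨j, h⟩ else 0 with hc'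
    have hcz : ∀ j, k < j → c' j = 0 := by
      intro j hj
      simp only [hc']
      rw [dif_neg (by omega)]
    have Hc : ∀ t, k+1 ≤ t → t ≤ W + k →
        ∑ j ∈ Finset.range (k+1), c' j * (Nat.choose q (t - j) : K) = 0 := by
      intro t ht1 ht2
      have hsW : t - (k+1) < W := by omega
      have hrow := congrFun hc0 ⟨t - (k+1), hsW⟩
      rw [Matrix.toLin'_apply] at hrow
      have hrow' : ∑ j : Fin (k+1), T ⟨t-(k+1), hsW⟩ j * c j = 0 := by
        simpa [Matrix.mulVec, dotProduct] using hrow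
      rw [← hrow']
      rw [← Fin.sum_univ_eq_sum_range (fun j => c' j * (Nat.choose q (t - j) : K)) (k+1)]
      apply Finset.sum_congr rfl
      intro j _
      have e1 : c' (j:ℕ) = c j := by simp only [hc']; rw [dif_pos j.isLt]
      have e2 : W + (j:ℕ) - (t - (k+1)) = q - (t - (j:ℕ)) := by omega
      have e3 : t - (j:ℕ) ≤ q := by omega
      rw [e1, hT]
      simp only []
      rw [e2, Nat.choose_symm e3, mul_comm]
    funext j
    have hcj := core' p k δ W q hk hδ hq hp hW c' hcz Hc (j:ℕ)
    simp only [hc'] at hcj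
    rw [dif_pos j.isLt] at hcj
    simpa using hcj
  obtain ⟨g, hg⟩ := LinearMap.exists_leftInverse_of_injective (Matrix.toLin' T) hinj
  set L := LinearMap.toMatrix' g with hLdef
  have hL : L * T = 1 := by
    have h' : LinearMap.toMatrix' g * LinearMap.toMatrix' (Matrix.toLin' T)
        = LinearMap.toMatrix' (g ∘ₗ Matrix.toLin' T) :=
      (LinearMap.toMatrix'_comp g (Matrix.toLin' T)).symm
    rw [LinearMap.toMatrix'_toLin'] at h'
    rw [hLdef, h', hg, LinearMap.toMatrix'_id]
  set v : Fin (k+1) → Q := fun j => α^(W+(j:ℕ)) * β^(q-1-(j:ℕ)) with hv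
  have hrel : ∀ s : Fin W, ∑ j : Fin (k+1), T s j • v j = 0 := by
    intro s
    have hrl := rel_lemma' (K := K) k W q hk hW1 hq α β hα hβ hs (s:ℕ) s.isLt
    rw [← Fin.sum_univ_eq_sum_range
      (fun j => (Nat.choose q (W + j - (s:ℕ)) : K) • (α^(W+j) * β^(q-1-j))) (k+1)] at hrl
    exact hrl
  intro j hj
  have hjlt : j < k+1 := by omega
  have hvj : v ⟨j, hjlt⟩ = 0 := by
    have h1 : v ⟨j, hjlt⟩ = ∑ i : Fin (k+1), ((L * T) ⟨j, hjlt⟩ i) • v i := by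
      rw [hL]; simp [Matrix.one_apply]
    rw [h1]
    have h2 : ∀ i : Fin (k+1), ((L * T) ⟨j, hjlt⟩ i) • v i
        = ∑ s : Fin W, (L ⟨j, hjlt⟩ s) • ((T s i) • v i) := by
      intro i
      rw [Matrix.mul_apply, Finset.sum_smul]
      exact Finset.sum_congr rfl fun s _ => mul_smul _ _ _
    rw [Finset.sum_congr rfl fun i _ => h2 i, Finset.sum_comm]
    have h3 : ∀ s : Fin W, ∑ i : Fin (k+1), (L ⟨j, hjlt⟩ s) • ((T s i) • v i) = 0 := by
      intro s
      rw [← Finset.smul_sum, hrel s, smul_zero]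
    rw [Finset.sum_congr rfl fun s _ => h3 s, Finset.sum_const_zero]
  simpa [hv] using hvj

private lemma span_pair_pow_le' {R : Type*} [CommRing R] {x y : R} {J : Ideal R} {d : ℕ}
    (h : ∀ i ≤ d, x^i * y^(d-i) ∈ J) : (Ideal.span {x, y})^d ≤ J := by
  have key : ∀ e : ℕ,
      (Ideal.span {x, y})^e ≤ Ideal.span ((fun i => x^i * y^(e-i)) '' Set.Iic e) := by
    intro e
    induction e with
    | zero =>
      have h1 : (1:R) ∈ Ideal.span ((fun i => x^i * y^(0-i)) '' Set.Iic 0) := by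
        apply Ideal.subset_span
        exact ⟨0, Set.mem_Iic.2 le_rfl, by simp⟩
      have h2 : Ideal.span ((fun i => x^i * y^(0-i)) '' Set.Iic 0) = ⊤ :=
        (Ideal.eq_top_iff_one _).2 h1
      simp only [pow_zero, Ideal.one_eq_top]
      exact le_of_eq h2.symm
    | succ e ih =>
      rw [pow_succ]
      refine le_trans (Ideal.mul_mono_left ih) ?_
      rw [Ideal.span_mul_span']
      apply Ideal.span_le.2
      rintro z hz
      rw [Set.mem_mul] at hz
      obtain ⟨a, ⟨i, hi, rfl⟩, b, hb, rfl⟩ := hz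
      rw [Set.mem_Iic] at hi
      rcases hb with rfl | rfl
      · apply Ideal.subset_span
        refine ⟨i+1, Set.mem_Iic.2 (by omega), ?_⟩
        have he : e - i = e + 1 - (i+1) := by omega
        simp only [← he]
        ring
      · apply Ideal.subset_span
        refine ⟨i, Set.mem_Iic.2 (by omega), ?_⟩
        have he : e + 1 - i = (e - i) + 1 := by omega
        simp only [he]
        ring
  refine (key d).trans (Ideal.span_le.2 ?_)
  rintro z ⟨i, hi, rfl⟩
  exact h i (Set.mem_Iic.1 hi)

end Helpers

open MvPolynomial

theorem stmt_4 (K : Type*) [Field K] (p n k δ : ℕ) [Fact p.Prime] [CharP K p]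
    (hn : 4 ≤ n) (hk : 1 ≤ k) (hδ : 2 ≤ δ) (hδn : δ ≤ n - 1) (hp : p = n * k + δ)
    (A B : MvPolynomial (Fin 2) K) (hA : A = X 0) (hB : B = X 1) :
    (Ideal.span {A, B}) ^ ((2 * n - 3) * k) ≤
      Ideal.span {A ^ ((n - 1) * k + 1), B ^ ((n - 1) * k + 1), (A + B) ^ ((n - 1) * k + 1)} := by
  clear hA hB
  set W := (n-2)*k with hWdef
  have hq : (n-1)*k+1 = W + k + 1 := by
    have h1 : n - 1 = (n-2) + 1 := by omega
    rw [hWdef, h1, add_mul, one_mul]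
  have hd : (2*n-3)*k = 2*W + k := by
    have h1 : 2*n-3 = (n-2) + (n-1) := by omega
    have h2 : n - 1 = (n-2) + 1 := by omega
    rw [hWdef, h1, h2, add_mul, add_mul, one_mul]
    ring
  have hp' : p = W + 2*k + δ := by
    have h1 : n = (n-2) + 2 := by omega
    rw [hp, hWdef]
    conv_lhs => rw [h1]
    rw [add_mul]
  have hW1 : 1 ≤ W := Nat.mul_pos (by omega) hk
  have hWdisj : k + δ - 1 ≤ W ∨ (k = 1 ∧ W = δ - 1 ∧ 3 ≤ δ) := by
    rcases Nat.lt_or_ge k 2 with hk2 | hk2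
    · have hk1 : k = 1 := by omega
      have hWn : W = n - 2 := by rw [hWdef, hk1, mul_one]
      by_cases hδ2 : δ ≤ n - 2
      · left; omega
      · right
        refine ⟨hk1, by omega, by omega⟩
    · left
      have h3 : (n-3)*2 ≤ (n-3)*k := Nat.mul_le_mul_left _ hk2
      have h4 : W = (n-3)*k + k := by
        rw [hWdef]
        have h5 : n-2 = (n-3)+1 := by omega
        rw [h5, add_mul, one_mul]
      omega
  set J := Ideal.span {A ^ ((n-1)*k+1), B ^ ((n-1)*k+1), (A+B) ^ ((n-1)*k+1)} with hJ
  apply span_pair_pow_le'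
  intro i hi
  have hAq : A^((n-1)*k+1) ∈ J := Ideal.subset_span (by simp)
  have hBq : B^((n-1)*k+1) ∈ J := Ideal.subset_span (by simp)
  have hSq : (A+B)^((n-1)*k+1) ∈ J := Ideal.subset_span (by simp)
  rcases le_or_gt ((n-1)*k+1) i with hcase | hcase
  · have he : A^i * B^((2*n-3)*k - i)
        = A^((n-1)*k+1) * (A^(i - ((n-1)*k+1)) * B^((2*n-3)*k - i)) := by
      rw [← mul_assoc, ← pow_add]
      congr 2
      omega
    rw [he]
    exact Ideal.mul_mem_right _ _ hAq
  rcases le_or_gt ((n-1)*k+1) ((2*n-3)*k - i) with hcase2 | hcase2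
  · have he : A^i * B^((2*n-3)*k - i)
        = B^((n-1)*k+1) * (A^i * B^(((2*n-3)*k - i) - ((n-1)*k+1))) := by
      rw [mul_comm (B^((n-1)*k+1)), mul_assoc, ← pow_add]
      congr 2
      omega
    rw [he]
    exact Ideal.mul_mem_right _ _ hBq
  · rw [← Ideal.Quotient.eq_zero_iff_mem]
    have hq0A : (Ideal.Quotient.mk J A)^((n-1)*k+1) = 0 := by
      rw [← map_pow, Ideal.Quotient.eq_zero_iff_mem]; exact hAq
    have hq0B : (Ideal.Quotient.mk J B)^((n-1)*k+1) = 0 := by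
      rw [← map_pow, Ideal.Quotient.eq_zero_iff_mem]; exact hBq
    have hq0S : (Ideal.Quotient.mk J A + Ideal.Quotient.mk J B)^((n-1)*k+1) = 0 := by
      rw [← RingHom.map_add, ← map_pow, Ideal.Quotient.eq_zero_iff_mem]; exact hSq
    have hhard := hard' (K := K) (Q := MvPolynomial (Fin 2) K ⧸ J) p k δ W ((n-1)*k+1)
      hk hδ hq hp' hWdisj hW1 (Ideal.Quotient.mk J A) (Ideal.Quotient.mk J B)
      hq0A hq0B hq0S (i - W) (by omega)
    rw [map_mul, map_pow, map_pow]
    rw [show i = W + (i - W) by omega]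
    rw [show (2*n-3)*k - (W + (i-W)) = (n-1)*k+1 - 1 - (i-W) by omega]
    exact hhard
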